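/- Assume that {(1,v) : v ∈ V} spans ℝ^{d+1}. Then the map Φ : ℝ^{d+1} → ℝ^{d+1} defined by Φ(λ) = Σ_{v∈V} θ_v(λ)(1,v) is infinitely differentiable and injective, its image is exactly the interior of the convex hull of the finite set {I(ξ) : ξ ∈ {0,1}^V} = {Σ_{v∈S}(1,v) : S ⊆ V}, and Φ is a C^∞ diffeomorphism onto this image (its inverse map, defined on the image, is infinitely differentiable). -/

import Mathlib

open scoped BigOperators
open scoped Matrix

/-- `θ_v(λ) = exp(λ₀ + Σ_k λ_k v_k)/(1 + exp(λ₀ + Σ_k λ_k v_k))`. -/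
noncomputable def thetaV (d : ℕ) (lam : Fin (d + 1) → ℝ) (v : Fin d → ℝ) : ℝ :=
  Real.exp (lam 0 + ∑ k : Fin d, lam k.succ * v k) /
    (1 + Real.exp (lam 0 + ∑ k : Fin d, lam k.succ * v k))

/-- `Phi d V lam = Σ_{v ∈ V} θ_v(λ)(1,v)`, the vector of mean density and momentum. -/
noncomputable def Phi (d : ℕ) (V : Finset (Fin d → ℝ)) (lam : Fin (d + 1) → ℝ) :
    Fin (d + 1) → ℝ :=
  ∑ v ∈ V, thetaV d lam v • (Fin.cons 1 v : Fin (d + 1) → ℝ)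

/-- The set `{I(ξ) : ξ ∈ {0,1}^V} = {Σ_{v ∈ S}(1,v) : S ⊆ V}` of conserved-quantity
vectors of configurations. -/
def IvecSet (d : ℕ) (V : Finset (Fin d → ℝ)) : Set (Fin (d + 1) → ℝ) :=
  {x | ∃ ξ : {v // v ∈ V} → Bool,
    x = ∑ v : {v // v ∈ V},
      (if ξ v then (1 : ℝ) else 0) • (Fin.cons 1 v.val : Fin (d + 1) → ℝ)}

/-! ### Auxiliary material -/

noncomputable def logistic (t : ℝ) : ℝ := Real.exp t / (1 + Real.exp t)

lemma one_add_exp_pos (t : ℝ) : (0:ℝ) < 1 + Real.exp t := by positivity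

lemma logistic_mem_Ioo (t : ℝ) : logistic t ∈ Set.Ioo (0:ℝ) 1 := by
  constructor
  · exact div_pos (Real.exp_pos t) (one_add_exp_pos t)
  · unfold logistic; rw [div_lt_one (one_add_exp_pos t)]; linarith

lemma logistic_strictMono : StrictMono logistic := by
  intro a b hab
  unfold logistic
  rw [div_lt_div_iff₀ (one_add_exp_pos a) (one_add_exp_pos b)]
  have := Real.exp_lt_exp.mpr hab
  nlinarith [Real.exp_pos a, Real.exp_pos b]

lemma contDiff_logistic : ContDiff ℝ (⊤ : ℕ∞) logistic :=
  Real.contDiff_exp.div (contDiff_const.add Real.contDiff_exp) (fun t => (one_add_exp_pos t).ne')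

lemma hasDerivAt_log_one_add_exp (t : ℝ) :
    HasDerivAt (fun s => Real.log (1 + Real.exp s)) (logistic t) t := by
  have h : HasDerivAt (fun s => 1 + Real.exp s) (Real.exp t) t :=
    (Real.hasDerivAt_exp t).const_add 1
  exact h.log (one_add_exp_pos t).ne'

lemma hasDerivAt_logistic (t : ℝ) :
    HasDerivAt logistic (Real.exp t / (1 + Real.exp t)^2) t := by
  have h1 := Real.hasDerivAt_exp t
  have h2 : HasDerivAt (fun s => 1 + Real.exp s) (Real.exp t) t := h1.const_add 1
  have := h1.div h2 (one_add_exp_pos t).ne'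
  exact this.congr_deriv (by ring)

lemma log_one_add_exp_nonneg (t : ℝ) : 0 ≤ Real.log (1 + Real.exp t) := by
  have : (1:ℝ) ≤ 1 + Real.exp t := by nlinarith [Real.exp_pos t]
  exact Real.log_nonneg this

lemma le_log_one_add_exp (t : ℝ) : t ≤ Real.log (1 + Real.exp t) := by
  have h : Real.exp t ≤ 1 + Real.exp t := by linarith [Real.exp_pos t]
  calc t = Real.log (Real.exp t) := (Real.log_exp t).symm
  _ ≤ Real.log (1 + Real.exp t) := Real.log_le_log (Real.exp_pos t) h

noncomputable def dotCLM {m : ℕ} (w : Fin m → ℝ) : (Fin m → ℝ) →L[ℝ] ℝ :=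
  LinearMap.toContinuousLinearMap
    { toFun := fun x => x ⬝ᵥ w
      map_add' := fun x y => add_dotProduct x y w
      map_smul' := fun c x => smul_dotProduct c x w }

@[simp] lemma dotCLM_apply {m : ℕ} (w x : Fin m → ℝ) : dotCLM w x = x ⬝ᵥ w := rfl

section Main

variable {d : ℕ} {V : Finset (Fin d → ℝ)}

/-- `(1, v)` for `v` in `V`. -/
def uv (d : ℕ) (V : Finset (Fin d → ℝ)) (v : {v // v ∈ V}) : Fin (d + 1) → ℝ :=
  Fin.cons 1 v.val

lemma dot_uv (lam : Fin (d+1) → ℝ) (v : {v // v ∈ V}) :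
    lam ⬝ᵥ uv d V v = lam 0 + ∑ k : Fin d, lam k.succ * v.val k := by
  simp [uv, dotProduct, Fin.sum_univ_succ]

lemma thetaV_eq (lam : Fin (d+1) → ℝ) (v : {v // v ∈ V}) :
    thetaV d lam v.val = logistic (lam ⬝ᵥ uv d V v) := by
  rw [dot_uv]; rfl

lemma Phi_eq (lam : Fin (d+1) → ℝ) :
    Phi d V lam = ∑ v : {v // v ∈ V}, logistic (lam ⬝ᵥ uv d V v) • uv d V v := by
  rw [Phi, ← Finset.sum_coe_sort V]
  exact Finset.sum_congr rfl fun v _ => by rw [thetaV_eq]; rfl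

lemma Phi_dot (lam x : Fin (d+1) → ℝ) :
    Phi d V lam ⬝ᵥ x = ∑ v : {v // v ∈ V}, logistic (lam ⬝ᵥ uv d V v) * (uv d V v ⬝ᵥ x) := by
  rw [Phi_eq]
  simp only [dotProduct, Finset.sum_apply, Pi.smul_apply, smul_eq_mul, Finset.sum_mul,
    Finset.mul_sum]
  rw [Finset.sum_comm]
  exact Finset.sum_congr rfl fun v _ => Finset.sum_congr rfl fun i _ => by ring

/-- From the spanning hypothesis: a vector orthogonal to all `(1,v)` is zero. -/
lemma eq_zero_of_dot_eq_zero
    (hspan : Submodule.span ℝ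
        (Set.range (fun v : {v // v ∈ V} => (Fin.cons 1 v.val : Fin (d + 1) → ℝ))) = ⊤)
    (x : Fin (d+1) → ℝ) (hx : ∀ v : {v // v ∈ V}, uv d V v ⬝ᵥ x = 0) : x = 0 := by
  have hφ : ∀ y : Fin (d+1) → ℝ, y ⬝ᵥ x = 0 := by
    intro y
    have hy : y ∈ Submodule.span ℝ
        (Set.range (fun v : {v // v ∈ V} => (Fin.cons 1 v.val : Fin (d + 1) → ℝ))) := by
      rw [hspan]; trivial
    refine Submodule.span_induction ?_ ?_ ?_ ?_ hy
    · rintro y ⟨v, rfl⟩; exact hx v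
    · simp
    · intro a b _ _ ha hb; rw [add_dotProduct, ha, hb, add_zero]
    · intro c a _ ha; rw [smul_dotProduct, ha, smul_zero]
  have := hφ x
  exact dotProduct_self_eq_zero.mp this

lemma sum_smul_dot {ι : Type*} [Fintype ι] {m : ℕ} (f : ι → ℝ) (u : ι → Fin m → ℝ)
    (x : Fin m → ℝ) : (∑ v, f v • u v) ⬝ᵥ x = ∑ v, f v * (u v ⬝ᵥ x) := by
  simp only [dotProduct, Finset.sum_apply, Pi.smul_apply, smul_eq_mul, Finset.sum_mul,
    Finset.mul_sum]
  rw [Finset.sum_comm]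
  exact Finset.sum_congr rfl fun v _ => Finset.sum_congr rfl fun i _ => by ring

lemma contDiff_Phi : ContDiff ℝ (⊤ : ℕ∞) (Phi d V) := by
  have : Phi d V = fun lam => ∑ v : {v // v ∈ V}, logistic (lam ⬝ᵥ uv d V v) • uv d V v :=
    funext Phi_eq
  rw [this]
  apply ContDiff.sum
  intro v _
  exact (contDiff_logistic.comp (dotCLM (uv d V v)).contDiff).smul contDiff_const

/-! ### The zonotope -/

/-- The linear map `t ↦ ∑ v, t v • (1, v)`. -/
noncomputable def Lmap (d : ℕ) (V : Finset (Fin d → ℝ)) :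
    ({v // v ∈ V} → ℝ) →ₗ[ℝ] (Fin (d+1) → ℝ) where
  toFun t := ∑ v : {v // v ∈ V}, t v • uv d V v
  map_add' x y := by simp [add_smul, Finset.sum_add_distrib]
  map_smul' c x := by simp [Finset.smul_sum, smul_smul]

lemma IvecSet_eq : IvecSet d V =
    Lmap d V '' (Set.univ.pi fun _ : {v // v ∈ V} => ({0, 1} : Set ℝ)) := by
  ext x
  constructor
  · rintro ⟨ξ, rfl⟩
    exact ⟨fun v => if ξ v then (1:ℝ) else 0,
      fun v _ => by by_cases h : ξ v <;> simp [h],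
      by simp [Lmap, uv]⟩
  · rintro ⟨t, ht, rfl⟩
    classical
    refine ⟨fun v => decide (t v = 1), ?_⟩
    show _ = ∑ v : {v // v ∈ V}, _ • uv d V v
    simp only [Lmap, LinearMap.coe_mk, AddHom.coe_mk]
    refine Finset.sum_congr rfl fun v _ => ?_
    by_cases hv : t v = 1
    · simp [hv]
    · have h0 : t v = 0 := by
        rcases ht v (Set.mem_univ v) with h | h
        · exact h
        · exact absurd h hv
      simp [hv, h0]

lemma convexHull_IvecSet : convexHull ℝ (IvecSet d V) =
    Lmap d V '' (Set.univ.pi fun _ : {v // v ∈ V} => Set.Icc (0:ℝ) 1) := by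
  have hcube : convexHull ℝ (Set.univ.pi fun _ : {v // v ∈ V} => ({0, 1} : Set ℝ)) =
      Set.univ.pi fun _ : {v // v ∈ V} => Set.Icc (0:ℝ) 1 := by
    apply Set.Subset.antisymm
    · apply convexHull_min
      · intro t ht v _
        have h := ht v (Set.mem_univ v)
        rcases h with h | h
        · rw [h]; exact Set.left_mem_Icc.mpr zero_le_one
        · simp only [Set.mem_singleton_iff] at h
          rw [h]; exact Set.right_mem_Icc.mpr zero_le_one
      · exact convex_pi fun i _ => convex_Icc 0 1
    · intro x hx
      refine mem_convexHull_pi fun i _ => ?_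
      have h := hx i (Set.mem_univ i)
      rw [convexHull_pair, segment_eq_Icc zero_le_one]
      exact h
  rw [IvecSet_eq, ← LinearMap.image_convexHull, hcube]

lemma Lmap_surjective
    (hspan : Submodule.span ℝ
        (Set.range (fun v : {v // v ∈ V} => (Fin.cons 1 v.val : Fin (d + 1) → ℝ))) = ⊤) :
    Function.Surjective (Lmap d V) := by
  rw [← LinearMap.range_eq_top, ← top_le_iff, ← hspan, Submodule.span_le]
  rintro y ⟨v, rfl⟩
  have key : Lmap d V (Pi.single v (1:ℝ)) = uv d V v := by
    show ∑ w : {v // v ∈ V}, (Pi.single v (1:ℝ) : {v // v ∈ V} → ℝ) w • uv d V w = uv d V v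
    rw [Finset.sum_eq_single v]
    · simp
    · intro w _ hw
      rw [Pi.single_eq_of_ne hw, zero_smul]
    · intro h; exact absurd (Finset.mem_univ v) h
  exact ⟨Pi.single v 1, key⟩

lemma Phi_mem_interior
    (hspan : Submodule.span ℝ
        (Set.range (fun v : {v // v ∈ V} => (Fin.cons 1 v.val : Fin (d + 1) → ℝ))) = ⊤)
    (lam : Fin (d+1) → ℝ) :
    Phi d V lam ∈ interior (convexHull ℝ (IvecSet d V)) := by
  rw [convexHull_IvecSet]
  have hLc : Continuous (Lmap d V) := (Lmap d V).continuous_of_finiteDimensional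
  have hopen : IsOpenMap (Lmap d V) := by
    let Lc : ({v // v ∈ V} → ℝ) →L[ℝ] (Fin (d+1) → ℝ) :=
      ⟨Lmap d V, hLc⟩
    have : IsOpenMap Lc := Lc.isOpenMap (Lmap_surjective hspan)
    exact this
  have hsub : Lmap d V '' interior (Set.univ.pi fun _ : {v // v ∈ V} => Set.Icc (0:ℝ) 1) ⊆
      interior (Lmap d V '' (Set.univ.pi fun _ : {v // v ∈ V} => Set.Icc (0:ℝ) 1)) :=
    hopen.image_interior_subset _
  apply hsub
  refine ⟨fun v => logistic (lam ⬝ᵥ uv d V v), ?_, (Phi_eq lam).symm⟩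
  rw [interior_pi_set Set.finite_univ]
  intro v _
  rw [interior_Icc]
  exact logistic_mem_Ioo _

/-! ### The potential function -/

noncomputable def Fpot (d : ℕ) (V : Finset (Fin d → ℝ)) (lam : Fin (d+1) → ℝ) : ℝ :=
  ∑ v : {v // v ∈ V}, Real.log (1 + Real.exp (lam ⬝ᵥ uv d V v))

lemma hasFDerivAt_Fpot (lam : Fin (d+1) → ℝ) :
    HasFDerivAt (Fpot d V)
      (∑ v : {v // v ∈ V}, logistic (lam ⬝ᵥ uv d V v) • dotCLM (uv d V v)) lam := by
  apply HasFDerivAt.fun_sum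
  intro v _
  exact (hasDerivAt_log_one_add_exp (lam ⬝ᵥ uv d V v)).comp_hasFDerivAt lam
    (dotCLM (uv d V v)).hasFDerivAt

lemma dot_le_Fpot (lam : Fin (d+1) → ℝ) {q : Fin (d+1) → ℝ}
    (hq : q ∈ convexHull ℝ (IvecSet d V)) : lam ⬝ᵥ q ≤ Fpot d V lam := by
  have hlin : IsLinearMap ℝ (fun x : Fin (d+1) → ℝ => lam ⬝ᵥ x) :=
    ⟨fun x y => dotProduct_add lam x y, fun c x => by
      simp [dotProduct_smul]⟩
  have hconv : Convex ℝ {x : Fin (d+1) → ℝ | lam ⬝ᵥ x ≤ Fpot d V lam} :=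
    convex_halfSpace_le hlin _
  have hsub : IvecSet d V ⊆ {x : Fin (d+1) → ℝ | lam ⬝ᵥ x ≤ Fpot d V lam} := by
    rintro x ⟨ξ, rfl⟩
    show lam ⬝ᵥ _ ≤ _
    rw [dotProduct_comm, sum_smul_dot]
    apply Finset.sum_le_sum
    intro v _
    have hcomm : (Fin.cons 1 v.val : Fin (d+1) → ℝ) ⬝ᵥ lam = lam ⬝ᵥ uv d V v :=
      dotProduct_comm _ _
    cases hb : ξ v
    · simp only [Bool.false_eq_true, if_false, zero_mul]
      exact log_one_add_exp_nonneg _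
    · simp only [if_true, one_mul, hcomm]
      exact le_log_one_add_exp _
  exact convexHull_min hsub hconv hq

lemma interior_subset_range
    (hspan : Submodule.span ℝ
        (Set.range (fun v : {v // v ∈ V} => (Fin.cons 1 v.val : Fin (d + 1) → ℝ))) = ⊤)
    {p : Fin (d+1) → ℝ} (hp : p ∈ interior (convexHull ℝ (IvecSet d V))) :
    p ∈ Set.range (Phi d V) := by
  obtain ⟨ε, hε, hball⟩ : ∃ ε > 0, Metric.ball p ε ⊆ convexHull ℝ (IvecSet d V) := by
    obtain ⟨ε, hε, hball⟩ := Metric.isOpen_iff.mp isOpen_interior p hp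
    exact ⟨ε, hε, hball.trans interior_subset⟩
  set g : (Fin (d+1) → ℝ) → ℝ := fun lam => Fpot d V lam - lam ⬝ᵥ p with hg
  -- coercivity
  have key : ∀ lam, (ε/2) * ‖lam‖ ≤ g lam := by
    intro lam
    by_cases h0 : lam = 0
    · subst h0
      simp only [hg, norm_zero, mul_zero, zero_dotProduct, sub_zero]
      exact Finset.sum_nonneg fun v _ => log_one_add_exp_nonneg _
    · have hnorm : 0 < ‖lam‖ := norm_pos_iff.mpr h0
      set c : ℝ := ε/2/‖lam‖ with hc
      have hcpos : 0 < c := div_pos (half_pos hε) hnorm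
      have hq : p + c • lam ∈ convexHull ℝ (IvecSet d V) := by
        apply hball
        rw [Metric.mem_ball, dist_eq_norm, add_sub_cancel_left, norm_smul,
          Real.norm_eq_abs, abs_of_pos hcpos, hc, div_mul_cancel₀ _ hnorm.ne']
        linarith
      have h1 : lam ⬝ᵥ (p + c • lam) ≤ Fpot d V lam := dot_le_Fpot lam hq
      rw [dotProduct_add, dotProduct_smul] at h1
      have h2 : ‖lam‖^2 ≤ lam ⬝ᵥ lam := by
        obtain ⟨i, hi⟩ := Finite.exists_max (fun i => |lam i|)
        have hle : ‖lam‖ ≤ |lam i| := pi_norm_le_iff_of_nonneg (abs_nonneg _) |>.mpr hi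
        calc ‖lam‖^2 ≤ |lam i|^2 := by nlinarith [norm_nonneg lam]
        _ = lam i * lam i := by rw [sq_abs]; ring
        _ ≤ ∑ j, lam j * lam j :=
            Finset.single_le_sum (fun j _ => mul_self_nonneg (lam j)) (Finset.mem_univ i)
        _ = lam ⬝ᵥ lam := rfl
      have h3 : (ε/2) * ‖lam‖ ≤ c * (lam ⬝ᵥ lam) := by
        have hc2 : c * ‖lam‖^2 = (ε/2) * ‖lam‖ := by
          rw [hc]; field_simp
        nlinarith [mul_le_mul_of_nonneg_left h2 hcpos.le]
      have : c * (lam ⬝ᵥ lam) = c • (lam ⬝ᵥ lam) := rfl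
      simp only [hg]
      linarith [h1, h3]
  -- continuity of g
  have hFc : Continuous (Fpot d V) := by
    rw [continuous_iff_continuousAt]
    exact fun x => (hasFDerivAt_Fpot x).differentiableAt.continuousAt
  have hgc : Continuous g := by
    apply hFc.sub
    exact (dotCLM p).continuous
  -- minimum on a large ball
  have hg0 : 0 ≤ g 0 := by simpa using key 0
  set R : ℝ := (g 0 + 1) / (ε/2) with hR
  have hRpos : 0 < R := div_pos (by linarith) (half_pos hε)
  obtain ⟨a, ha_mem, hmin⟩ : ∃ a ∈ Metric.closedBall (0 : Fin (d+1) → ℝ) R,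
      ∀ x ∈ Metric.closedBall (0 : Fin (d+1) → ℝ) R, g a ≤ g x := by
    obtain ⟨a, ha, h⟩ := (isCompact_closedBall (0 : Fin (d+1) → ℝ) R).exists_isMinOn
      ⟨0, Metric.mem_closedBall_self hRpos.le⟩ hgc.continuousOn
    exact ⟨a, ha, fun x hx => h hx⟩
  have hglobal : ∀ lam, g a ≤ g lam := by
    intro lam
    by_cases hmem : lam ∈ Metric.closedBall (0 : Fin (d+1) → ℝ) R
    · exact hmin lam hmem
    · have hlam : R < ‖lam‖ := by
        rw [Metric.mem_closedBall, dist_zero_right, not_le] at hmem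
        exact hmem
      have : g a ≤ g 0 := hmin 0 (Metric.mem_closedBall_self hRpos.le)
      have h2 : (ε/2) * R < (ε/2) * ‖lam‖ := by
        apply mul_lt_mul_of_pos_left hlam (half_pos hε)
      have h3 : (ε/2) * R = g 0 + 1 := by
        rw [hR]; field_simp
      have hk := key lam
      clear_value g R
      linarith [hk, h2, h3, this]
  -- a is a local min, so the derivative vanishes
  have hlocal : IsLocalMin g a := Filter.Eventually.of_forall hglobal
  have hD : HasFDerivAt g
      ((∑ v : {v // v ∈ V}, logistic (a ⬝ᵥ uv d V v) • dotCLM (uv d V v)) - dotCLM p) a :=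
    (hasFDerivAt_Fpot a).sub (dotCLM p).hasFDerivAt
  have hzero := hlocal.hasFDerivAt_eq_zero hD
  refine ⟨a, ?_⟩
  have hdot : ∀ x, (Phi d V a - p) ⬝ᵥ x = 0 := by
    intro x
    have := congrFun (congrArg (fun (L : (Fin (d+1) → ℝ) →L[ℝ] ℝ) => (L : (Fin (d+1) → ℝ) → ℝ))
      hzero) x
    simp only [ContinuousLinearMap.coe_sub', Pi.sub_apply, ContinuousLinearMap.coe_sum',
      Finset.sum_apply, ContinuousLinearMap.coe_smul', Pi.smul_apply, dotCLM_apply,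
      ContinuousLinearMap.zero_apply, smul_eq_mul] at this
    rw [sub_dotProduct, Phi_dot]
    have hcomm : ∀ v : {v // v ∈ V}, uv d V v ⬝ᵥ x = x ⬝ᵥ uv d V v := fun v =>
      dotProduct_comm _ _
    simp only [hcomm]
    rw [dotProduct_comm p x]
    linarith [this]
  have := hdot (Phi d V a - p)
  have hz := dotProduct_self_eq_zero.mp this
  exact sub_eq_zero.mp hz

/-! ### Derivative of Phi -/

noncomputable def DPhi (d : ℕ) (V : Finset (Fin d → ℝ)) (lam : Fin (d+1) → ℝ) :
    (Fin (d+1) → ℝ) →L[ℝ] (Fin (d+1) → ℝ) :=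
  ∑ v : {v // v ∈ V},
    (Real.exp (lam ⬝ᵥ uv d V v) / (1 + Real.exp (lam ⬝ᵥ uv d V v))^2) •
      (dotCLM (uv d V v)).smulRight (uv d V v)

lemma hasFDerivAt_Phi (lam : Fin (d+1) → ℝ) :
    HasFDerivAt (Phi d V) (DPhi d V lam) lam := by
  have heq : Phi d V = fun lam => ∑ v : {v // v ∈ V}, logistic (lam ⬝ᵥ uv d V v) • uv d V v :=
    funext Phi_eq
  rw [heq, DPhi]
  apply HasFDerivAt.fun_sum
  intro v _
  have h1 : HasFDerivAt (fun x : Fin (d+1) → ℝ => logistic (x ⬝ᵥ uv d V v))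
      ((Real.exp (lam ⬝ᵥ uv d V v) / (1 + Real.exp (lam ⬝ᵥ uv d V v))^2) • dotCLM (uv d V v))
      lam := by
    have := (hasDerivAt_logistic (lam ⬝ᵥ uv d V v)).comp_hasFDerivAt lam (dotCLM (uv d V v)).hasFDerivAt
    exact this
  have h2 := h1.smul_const (uv d V v)
  convert h2 using 1
  ext x i
  simp [ContinuousLinearMap.smul_apply, ContinuousLinearMap.smulRight_apply, smul_smul,
    mul_comm, mul_assoc, mul_left_comm]

lemma DPhi_injective
    (hspan : Submodule.span ℝ
        (Set.range (fun v : {v // v ∈ V} => (Fin.cons 1 v.val : Fin (d + 1) → ℝ))) = ⊤)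
    (lam : Fin (d+1) → ℝ) : Function.Injective (DPhi d V lam) := by
  have hker : ∀ x, DPhi d V lam x = 0 → x = 0 := by
    intro x hx
    have hdot : (∑ v : {v // v ∈ V},
        (Real.exp (lam ⬝ᵥ uv d V v) / (1 + Real.exp (lam ⬝ᵥ uv d V v))^2) *
          ((x ⬝ᵥ uv d V v) * (uv d V v ⬝ᵥ x))) = 0 := by
      have h0 : DPhi d V lam x ⬝ᵥ x = 0 := by rw [hx, zero_dotProduct]
      rw [DPhi] at h0
      simp only [ContinuousLinearMap.coe_sum', Finset.sum_apply,
        ContinuousLinearMap.coe_smul', Pi.smul_apply,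
        ContinuousLinearMap.smulRight_apply, dotCLM_apply] at h0
      rw [show (∑ v : {v // v ∈ V},
          (Real.exp (lam ⬝ᵥ uv d V v) / (1 + Real.exp (lam ⬝ᵥ uv d V v))^2) •
            ((x ⬝ᵥ uv d V v) • uv d V v)) ⬝ᵥ x
          = ∑ v : {v // v ∈ V},
          (Real.exp (lam ⬝ᵥ uv d V v) / (1 + Real.exp (lam ⬝ᵥ uv d V v))^2) *
            ((x ⬝ᵥ uv d V v) * (uv d V v ⬝ᵥ x)) from ?_] at h0
      · exact h0
      · rw [show (fun v : {v // v ∈ V} =>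
            (Real.exp (lam ⬝ᵥ uv d V v) / (1 + Real.exp (lam ⬝ᵥ uv d V v))^2) •
              ((x ⬝ᵥ uv d V v) • uv d V v))
            = fun v : {v // v ∈ V} =>
            ((Real.exp (lam ⬝ᵥ uv d V v) / (1 + Real.exp (lam ⬝ᵥ uv d V v))^2) *
              (x ⬝ᵥ uv d V v)) • uv d V v from funext fun v => by rw [smul_smul]]
        rw [sum_smul_dot]
        exact Finset.sum_congr rfl fun v _ => by ring
    have hterms : ∀ v : {v // v ∈ V}, uv d V v ⬝ᵥ x = 0 := by
      have hnn : ∀ v ∈ (Finset.univ : Finset {v // v ∈ V}),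
          0 ≤ (Real.exp (lam ⬝ᵥ uv d V v) / (1 + Real.exp (lam ⬝ᵥ uv d V v))^2) *
            ((x ⬝ᵥ uv d V v) * (uv d V v ⬝ᵥ x)) := by
        intro v _
        have h1 : x ⬝ᵥ uv d V v = uv d V v ⬝ᵥ x := dotProduct_comm _ _
        rw [h1]
        have h2 : 0 < Real.exp (lam ⬝ᵥ uv d V v) / (1 + Real.exp (lam ⬝ᵥ uv d V v))^2 := by
          positivity
        exact mul_nonneg h2.le (mul_self_nonneg _)
      have := (Finset.sum_eq_zero_iff_of_nonneg hnn).mp hdot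
      intro v
      have hv := this v (Finset.mem_univ v)
      have hpos : 0 < Real.exp (lam ⬝ᵥ uv d V v) / (1 + Real.exp (lam ⬝ᵥ uv d V v))^2 := by
        positivity
      have h1 : x ⬝ᵥ uv d V v = uv d V v ⬝ᵥ x := dotProduct_comm _ _
      rw [h1] at hv
      have := mul_eq_zero.mp hv
      rcases this with h | h
      · exact absurd h hpos.ne'
      · rcases mul_self_eq_zero.mp h with h
        exact h
    exact eq_zero_of_dot_eq_zero hspan x hterms
  intro x y hxy
  have : DPhi d V lam (x - y) = 0 := by rw [map_sub, hxy, sub_self]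
  have := hker _ this
  exact sub_eq_zero.mp this

lemma Phi_injective
    (hspan : Submodule.span ℝ
        (Set.range (fun v : {v // v ∈ V} => (Fin.cons 1 v.val : Fin (d + 1) → ℝ))) = ⊤) :
    Function.Injective (Phi d V) := by
  intro a b hab
  have hsum : (∑ v : {v // v ∈ V},
      (logistic (a ⬝ᵥ uv d V v) - logistic (b ⬝ᵥ uv d V v)) * (uv d V v ⬝ᵥ (a - b))) = 0 := by
    have h1 : (Phi d V a - Phi d V b) ⬝ᵥ (a - b) = 0 := by
      rw [hab, sub_self, zero_dotProduct]
    rw [sub_dotProduct, Phi_dot, Phi_dot, ← Finset.sum_sub_distrib] at h1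
    rw [← h1]
    exact Finset.sum_congr rfl fun v _ => by
      rw [dotProduct_sub]; ring
  have hnn : ∀ v ∈ (Finset.univ : Finset {v // v ∈ V}),
      0 ≤ (logistic (a ⬝ᵥ uv d V v) - logistic (b ⬝ᵥ uv d V v)) * (uv d V v ⬝ᵥ (a - b)) := by
    intro v _
    have hd : uv d V v ⬝ᵥ (a - b) = a ⬝ᵥ uv d V v - b ⬝ᵥ uv d V v := by
      rw [dotProduct_comm, sub_dotProduct]
    rw [hd]
    rcases lt_trichotomy (a ⬝ᵥ uv d V v) (b ⬝ᵥ uv d V v) with h | h | h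
    · have := logistic_strictMono h
      nlinarith
    · rw [h]; simp
    · have := logistic_strictMono h
      nlinarith
  have hall := (Finset.sum_eq_zero_iff_of_nonneg hnn).mp hsum
  have hterms : ∀ v : {v // v ∈ V}, uv d V v ⬝ᵥ (a - b) = 0 := by
    intro v
    have hv := hall v (Finset.mem_univ v)
    have hd : uv d V v ⬝ᵥ (a - b) = a ⬝ᵥ uv d V v - b ⬝ᵥ uv d V v := by
      rw [dotProduct_comm, sub_dotProduct]
    rcases lt_trichotomy (a ⬝ᵥ uv d V v) (b ⬝ᵥ uv d V v) with h | h | h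
    · have := logistic_strictMono h
      rw [hd] at hv ⊢
      nlinarith
    · rw [hd, h, sub_self]
    · have := logistic_strictMono h
      rw [hd] at hv ⊢
      nlinarith
  have := eq_zero_of_dot_eq_zero hspan (a - b) hterms
  exact sub_eq_zero.mp this

end Main

/-- If `{(1,v) : v ∈ V}` spans `ℝ^{d+1}`, then `Φ(λ) = Σ_v θ_v(λ)(1,v)` is a smooth
injective map whose range is the interior of the convex hull of
`{I(ξ) : ξ ∈ {0,1}^V}`, and `Φ` is a `C^∞` diffeomorphism onto this image: its
inverse is infinitely differentiable on the image. -/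
theorem Phi_diffeomorphism
    (d : ℕ) (hd : 1 ≤ d) (V : Finset (Fin d → ℝ))
    (hspan : Submodule.span ℝ
        (Set.range (fun v : {v // v ∈ V} => (Fin.cons 1 v.val : Fin (d + 1) → ℝ))) = ⊤) :
    ContDiff ℝ (⊤ : ℕ∞) (Phi d V) ∧
    Function.Injective (Phi d V) ∧
    Set.range (Phi d V) = interior (convexHull ℝ (IvecSet d V)) ∧
    ∃ Ψ : (Fin (d + 1) → ℝ) → (Fin (d + 1) → ℝ),
      ContDiffOn ℝ (⊤ : ℕ∞) Ψ (Set.range (Phi d V)) ∧ ∀ lam, Ψ (Phi d V lam) = lam := by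
  have hrange : Set.range (Phi d V) = interior (convexHull ℝ (IvecSet d V)) := by
    apply Set.Subset.antisymm
    · rintro _ ⟨lam, rfl⟩
      exact Phi_mem_interior hspan lam
    · intro p hp
      exact interior_subset_range hspan hp
  have hinj := Phi_injective hspan
  refine ⟨contDiff_Phi, hinj, hrange, ?_⟩
  have hleft : Function.LeftInverse (Function.invFun (Phi d V)) (Phi d V) :=
    Function.leftInverse_invFun hinj
  refine ⟨Function.invFun (Phi d V), ?_, hleft⟩
  rintro _ ⟨lam, rfl⟩
  have hDinj := DPhi_injective hspan lam
  have hDsurj : Function.Surjective (DPhi d V lam).toLinearMap :=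
    LinearMap.injective_iff_surjective.mp hDinj
  let eL : (Fin (d+1) → ℝ) ≃ₗ[ℝ] (Fin (d+1) → ℝ) :=
    LinearEquiv.ofBijective (DPhi d V lam).toLinearMap ⟨hDinj, hDsurj⟩
  let e : (Fin (d+1) → ℝ) ≃L[ℝ] (Fin (d+1) → ℝ) := eL.toContinuousLinearEquiv
  have hf' : HasFDerivAt (Phi d V) (e : (Fin (d+1) → ℝ) →L[ℝ] (Fin (d+1) → ℝ)) lam := by
    have h := hasFDerivAt_Phi (V := V) lam
    convert h using 1
    ext x; rfl
  have hcd : ContDiffAt ℝ (⊤ : ℕ∞) (Phi d V) lam := contDiff_Phi.contDiffAt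
  have hn : ((⊤ : ℕ∞) : WithTop ℕ∞) ≠ 0 := by simp
  have hg_cd : ContDiffAt ℝ (⊤ : ℕ∞) (hcd.localInverse hf' hn) (Phi d V lam) :=
    hcd.to_localInverse hf' hn
  have hev : ∀ᶠ y in nhds (Phi d V lam), Phi d V ((hcd.localInverse hf' hn) y) = y :=
    (hcd.hasStrictFDerivAt' hf' hn).eventually_right_inverse
  have heq : Function.invFun (Phi d V) =ᶠ[nhds (Phi d V lam)] hcd.localInverse hf' hn := by
    filter_upwards [hev] with y hy
    have h1 : Phi d V (Function.invFun (Phi d V) y) = y := Function.invFun_eq ⟨_, hy⟩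
    exact hinj (h1.trans hy.symm)
  exact (hg_cd.congr_of_eventuallyEq heq).contDiffWithinAt
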